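/- arXiv:2108.08778 — 2 statements merged into one kernel-verified Lean document; each statement's English description precedes it below -/
import Mathlib

section
/- Under the hypotheses of the Main Lemma, if a_{ν+2} ≤ b − 1 where b = ⟨b_{μ+2}, ..., b_{μ+d}⟩, then q_{ν+2} < r_{μ+d}, contradicting q_{ν+2} = r_{μ+d}; hence b ≤ a_{ν+2}. -/
/-- Complete quotients of the continued fraction of `α`:
`cq α 0 = α`, `cq α (n+1) = 1 / fract (cq α n)`. -/
noncomputable def cq (α : ℝ) : ℕ → ℝ
  | 0 => α
  | n + 1 => 1 / Int.fract (cq α n)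

/-- Partial quotients `a_n` of the continued fraction of `α`. -/
noncomputable def pq (α : ℝ) (n : ℕ) : ℤ := ⌊cq α n⌋

/-- Convergent numerators `p_n`. -/
noncomputable def cnum (α : ℝ) : ℕ → ℤ
  | 0 => pq α 0
  | 1 => pq α 1 * pq α 0 + 1
  | n + 2 => pq α (n + 2) * cnum α (n + 1) + cnum α n

/-- Convergent denominators `q_n`. -/
noncomputable def cden (α : ℝ) : ℕ → ℤ
  | 0 => 1
  | 1 => pq α 1
  | n + 2 => pq α (n + 2) * cden α (n + 1) + cden α n

/-- Approximation errors `ξ_n = |q_n α - p_n|`. -/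
noncomputable def xi (α : ℝ) (n : ℕ) : ℝ := |(cden α n : ℝ) * α - (cnum α n : ℝ)|

/-- Value of the finite continued fraction `[c₁; c₂, ..., c_k]` (empty list gives `0`). -/
noncomputable def cfval : List ℝ → ℝ
  | [] => 0
  | c :: l => c + 1 / cfval l

/-- Reversed quotient `α*_n = [0; a_n, a_{n-1}, ..., a_1]`. -/
noncomputable def revq (α : ℝ) (n : ℕ) : ℝ :=
  1 / cfval ((List.range n).map fun i => (pq α (n - i) : ℝ))

/-- Distance of a real number to the nearest integer. -/
noncomputable def distZ (x : ℝ) : ℝ := |x - round x|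

/-- Irrationality measure function `ψ_α(t) = min_{q ∈ ℤ₊, q ≤ t} ‖qα‖`. -/
noncomputable def psi (α : ℝ) (t : ℝ) : ℝ :=
  sInf {v : ℝ | ∃ q : ℕ, 0 < q ∧ (q : ℝ) ≤ t ∧ v = distZ ((q : ℝ) * α)}

/-- Continuant `⟨c₁, ..., c_k⟩` (empty continuant equals `1`). -/
def contnt : List ℤ → ℤ
  | [] => 1
  | [c] => c
  | c :: c' :: l => c * contnt (c' :: l) + contnt l

/-- The `k`-index: the number of orderings (permutations) of the `ψ`-functions
that occur for arbitrarily large `t`. -/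
noncomputable def kIndex {n : ℕ} (α : Fin n → ℝ) : ℕ :=
  Set.ncard {σ : Equiv.Perm (Fin n) |
    ∀ T : ℝ, ∃ t : ℝ, T < t ∧ ∀ i j : Fin n, i < j →
      psi (α (σ j)) t < psi (α (σ i)) t}

lemma cq_irrational (γ : ℝ) (hγ : Irrational γ) : ∀ n, Irrational (cq γ n) := by
  intro n
  induction n with
  | zero => exact hγ
  | succ n ih =>
    show Irrational (1 / Int.fract (cq γ n))
    have h1 : Irrational (Int.fract (cq γ n)) := by
      unfold Int.fract
      exact Irrational.sub_intCast ih _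
    rw [one_div]
    exact h1.inv

lemma one_lt_cq (γ : ℝ) (hγ : Irrational γ) (n : ℕ) : 1 < cq γ (n + 1) := by
  show 1 < 1 / Int.fract (cq γ n)
  have hirr := cq_irrational γ hγ n
  have h0 : 0 < Int.fract (cq γ n) := by
    rw [Int.fract_pos]
    intro h
    exact (hirr.ne_int ⌊cq γ n⌋) h
  have h1 : Int.fract (cq γ n) < 1 := Int.fract_lt_one _
  rw [lt_one_div (by norm_num) h0]
  simpa using h1

lemma one_le_pq (γ : ℝ) (hγ : Irrational γ) (n : ℕ) : 1 ≤ pq γ (n + 1) := by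
  have := one_lt_cq γ hγ n
  unfold pq
  exact Int.le_floor.mpr (by exact_mod_cast this.le)

lemma one_le_cden (γ : ℝ) (hγ : Irrational γ) : ∀ n, 1 ≤ cden γ n
  | 0 => le_refl 1
  | 1 => one_le_pq γ hγ 0
  | n + 2 => by
    have h1 := one_le_cden γ hγ (n + 1)
    have h2 := one_le_cden γ hγ n
    have h3 := one_le_pq γ hγ (n + 1)
    show 1 ≤ pq γ (n + 2) * cden γ (n + 1) + cden γ n
    nlinarith

lemma cden_mono (γ : ℝ) (hγ : Irrational γ) (n : ℕ) : cden γ n ≤ cden γ (n + 1) := by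
  cases n with
  | zero => exact one_le_pq γ hγ 0
  | succ n =>
    have h1 := one_le_cden γ hγ (n + 1)
    have h2 := one_le_cden γ hγ n
    have h3 := one_le_pq γ hγ (n + 1)
    show cden γ (n + 1) ≤ pq γ (n + 2) * cden γ (n + 1) + cden γ n
    nlinarith

lemma one_le_contnt : ∀ l : List ℤ, (∀ x ∈ l, 1 ≤ x) → 1 ≤ contnt l
  | [], _ => le_refl 1
  | [c], h => h c (by simp)
  | c :: c' :: l, h => by
    have h1 := one_le_contnt (c' :: l) (fun x hx => h x (by simp at hx ⊢; tauto))
    have h2 := one_le_contnt l (fun x hx => h x (by simp [hx]))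
    have h3 : 1 ≤ c := h c (by simp)
    show 1 ≤ c * contnt (c' :: l) + contnt l
    nlinarith

lemma contnt_cons (c : ℤ) (l : List ℤ) (hl : l ≠ []) :
    contnt (c :: l) = c * contnt l + contnt l.tail := by
  cases l with
  | nil => exact absurd rfl hl
  | cons c' l => rfl

lemma cden_continuant (β : ℝ) (k : ℕ) : ∀ m : ℕ,
    cden β (m + 2 + k) =
      contnt ((List.range (k + 1)).map fun i => pq β (m + 2 + i)) * cden β (m + 1) +
      contnt (((List.range (k + 1)).map fun i => pq β (m + 2 + i)).tail) * cden β m := by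
  induction k with
  | zero =>
    intro m
    show pq β (m + 2) * cden β (m + 1) + cden β m = _
    simp [contnt]
  | succ k ih =>
    intro m
    have hlist : (List.range (k + 2)).map (fun i => pq β (m + 2 + i)) =
        pq β (m + 2) :: (List.range (k + 1)).map (fun i => pq β (m + 1 + 2 + i)) := by
      rw [List.range_succ_eq_map, List.map_cons, List.map_map]
      refine congrArg₂ List.cons rfl ?_
      apply List.map_congr_left
      intro i hi
      show pq β (m + 2 + (i + 1)) = pq β (m + 1 + 2 + i)
      congr 1
      omega
    have hidx : m + 2 + (k + 1) = (m + 1) + 2 + k := by omega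
    rw [hidx, ih (m + 1), hlist]
    have hne : (List.range (k + 1)).map (fun i => pq β (m + 1 + 2 + i)) ≠ [] := by
      simp
    rw [contnt_cons _ _ hne]
    have hc : cden β (m + 1 + 1) = pq β (m + 2) * cden β (m + 1) + cden β m := rfl
    rw [hc]
    simp only [List.tail_cons]
    ring

theorem stmt11 (α β : ℝ) (hα : Irrational α) (hβ : Irrational β)
    (ν μ d : ℕ) (hd : 2 ≤ d)
    (h3 : cden α (ν + 1) ≤ cden β (μ + 1)) :
    (pq α (ν + 2) ≤ contnt ((List.range (d - 1)).map fun i => pq β (μ + 2 + i)) - 1 →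
      cden α (ν + 2) < cden β (μ + d)) ∧
    (cden α (ν + 2) = cden β (μ + d) →
      contnt ((List.range (d - 1)).map fun i => pq β (μ + 2 + i)) ≤ pq α (ν + 2)) := by
  obtain ⟨k, rfl⟩ := Nat.exists_eq_add_of_le hd
  have e1 : 2 + k - 1 = k + 1 := by omega
  have e2 : μ + (2 + k) = μ + 2 + k := by omega
  rw [e1, e2]
  set L := (List.range (k + 1)).map fun i => pq β (μ + 2 + i) with hL
  have hA := cden_continuant β k μ
  have hLpos : ∀ x ∈ L, 1 ≤ x := by
    intro x hx
    rw [hL, List.mem_map] at hx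
    obtain ⟨i, _, rfl⟩ := hx
    have : μ + 2 + i = (μ + 1 + i) + 1 := by omega
    rw [this]
    exact one_le_pq β hβ _
  have hb : 1 ≤ contnt L := one_le_contnt L hLpos
  have hb' : 1 ≤ contnt L.tail :=
    one_le_contnt _ (fun x hx => hLpos x (List.mem_of_mem_tail hx))
  have hq : cden α (ν + 2) = pq α (ν + 2) * cden α (ν + 1) + cden α ν := rfl
  have hm1 : cden α ν ≤ cden α (ν + 1) := cden_mono α hα ν
  have hp1 : 1 ≤ cden α (ν + 1) := one_le_cden α hα (ν + 1)
  have hp2 : 1 ≤ cden β μ := one_le_cden β hβ μ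
  have hpa : 1 ≤ pq α (ν + 2) := one_le_pq α hα (ν + 1)
  have main : pq α (ν + 2) ≤ contnt L - 1 → cden α (ν + 2) < cden β (μ + 2 + k) := by
    intro h
    rw [hA, hq]
    have step1 : pq α (ν + 2) * cden α (ν + 1) ≤ (contnt L - 1) * cden α (ν + 1) :=
      mul_le_mul_of_nonneg_right h (by linarith)
    have step2 : contnt L * cden α (ν + 1) ≤ contnt L * cden β (μ + 1) :=
      mul_le_mul_of_nonneg_left h3 (by linarith)
    nlinarith
  refine ⟨main, fun heq => ?_⟩
  by_contra hlt
  push_neg at hlt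
  have : pq α (ν + 2) ≤ contnt L - 1 := by omega
  exact absurd heq (ne_of_lt (main this))
end

section
/- Suppose for irrationals α, β with convergent denominators (q_ν), (r_μ) one has ξ_ν ≤ η_μ, b ≤ α_{ν+2}, β_{μ+2}·b₋ ≤ α_{ν+2}, and q_{ν+1} ≤ r_{μ+1}; set x = r_{μ+1} − q_{ν+1}. Then 0 ≤ b·x ≤ q_ν − r_μ·b₋, with strict right inequality if β_{μ+2}·b₋ < α_{ν+2}. -/
lemma irr_cq {α : ℝ} (hα : Irrational α) : ∀ n, Irrational (cq α n) := by
  intro n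
  induction n with
  | zero => exact hα
  | succ n ih =>
    show Irrational (1 / Int.fract (cq α n))
    rw [one_div]
    have h1 : Irrational (Int.fract (cq α n)) := by
      unfold Int.fract; exact Irrational.sub_intCast ih _
    exact h1.inv

lemma fract_cq_pos {α : ℝ} (hα : Irrational α) (n : ℕ) : 0 < Int.fract (cq α n) := by
  rcases lt_or_eq_of_le (Int.fract_nonneg (cq α n)) with h | h
  · exact h
  · exfalso
    have hf := Int.fract_add_floor (cq α n)
    have : cq α n = (⌊cq α n⌋ : ℝ) := by linarith [h.symm]
    exact (irr_cq hα n).ne_int _ this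

lemma cq_gt_one {α : ℝ} (hα : Irrational α) (n : ℕ) : 1 < cq α (n + 1) := by
  show 1 < 1 / Int.fract (cq α n)
  exact one_lt_one_div (fract_cq_pos hα n) (Int.fract_lt_one _)

lemma cq_pos {α : ℝ} (hα : Irrational α) (n : ℕ) : 0 < cq α (n + 1) :=
  lt_trans one_pos (cq_gt_one hα n)

lemma pq_ge_one {α : ℝ} (hα : Irrational α) (n : ℕ) : 1 ≤ pq α (n + 1) := by
  rw [pq, Int.le_floor]
  exact_mod_cast (cq_gt_one hα n).le

lemma cden_pos {α : ℝ} (hα : Irrational α) : ∀ n, 0 < cden α n := by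
  have key : ∀ n, 0 < cden α n ∧ 0 < cden α (n + 1) := by
    intro n
    induction n with
    | zero => exact ⟨one_pos, lt_of_lt_of_le one_pos (pq_ge_one hα 0)⟩
    | succ n ih =>
      refine ⟨ih.2, ?_⟩
      show 0 < pq α (n + 2) * cden α (n + 1) + cden α n
      have h1 := pq_ge_one hα (n + 1)
      nlinarith [ih.1, ih.2]
  exact fun n => (key n).1

lemma err_rec {α : ℝ} (hα : Irrational α) :
    ∀ n, ((cden α (n+1) : ℝ) * α - cnum α (n+1)) * cq α (n + 2)
      = -((cden α n : ℝ) * α - cnum α n) := by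
  intro n
  induction n with
  | zero =>
    have e0 : (cden α 0 : ℝ) * α - cnum α 0 = Int.fract α := by
      show ((1:ℤ) : ℝ) * α - ((pq α 0 : ℤ) : ℝ) = Int.fract α
      rw [Int.fract]; push_cast [pq]; show 1 * α - _ = _ ; norm_num [cq]
    have hfa : α - (pq α 0 : ℝ) = Int.fract α := by
      rw [Int.fract, pq]; norm_num [cq]
    have hfa0 : Int.fract α ≠ 0 := by
      have : (0:ℝ) < Int.fract (cq α 0) := fract_cq_pos hα 0
      simp only [cq] at this
      linarith
    have e1 : (cden α 1 : ℝ) * α - cnum α 1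
        = -(Int.fract α) * Int.fract (cq α 1) := by
      show ((pq α 1 : ℤ) : ℝ) * α - ((pq α 1 * pq α 0 + 1 : ℤ) : ℝ) = _
      push_cast
      have hf1 : Int.fract (cq α 1) = cq α 1 - (pq α 1 : ℝ) := by
        rw [Int.fract, pq]
      have hcq1 : cq α 1 = 1 / Int.fract α := by
        show (1 : ℝ) / Int.fract (cq α 0) = _
        norm_num [cq]
      rw [hf1, hcq1]
      have key : -(Int.fract α) * (1 / Int.fract α - (pq α 1 : ℝ))
          = -1 + Int.fract α * (pq α 1 : ℝ) := by field_simp; ring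
      have h2 : (pq α 1 : ℝ) * (α - (pq α 0 : ℝ)) = (pq α 1 : ℝ) * Int.fract α := by
        rw [hfa]
      rw [key]; nlinarith [h2]
    rw [e0, e1]
    have h2 : cq α 2 = 1 / Int.fract (cq α 1) := rfl
    have hne : Int.fract (cq α 1) ≠ 0 := (fract_cq_pos hα 1).ne'
    rw [h2]
    field_simp
  | succ n ih =>
    have hrec : (cden α (n+2) : ℝ) * α - cnum α (n+2)
        = (pq α (n+2) : ℝ) * ((cden α (n+1) : ℝ) * α - cnum α (n+1))
          + ((cden α n : ℝ) * α - cnum α n) := by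
      show ((pq α (n+2) * cden α (n+1) + cden α n : ℤ) : ℝ) * α
          - ((pq α (n+2) * cnum α (n+1) + cnum α n : ℤ) : ℝ) = _
      push_cast; ring
    have hfr : Int.fract (cq α (n+2)) = cq α (n+2) - (pq α (n+2) : ℝ) := by
      rw [Int.fract, pq]
    have h3 : cq α (n + 3) = 1 / Int.fract (cq α (n+2)) := rfl
    have hne' : cq α (n+2) - (pq α (n+2) : ℝ) ≠ 0 := by
      rw [← hfr]; exact (fract_cq_pos hα (n+2)).ne'
    have hEn : ((cden α n : ℝ) * α - cnum α n)
        = -(((cden α (n+1) : ℝ) * α - cnum α (n+1)) * cq α (n+2)) := by linarith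
    rw [h3, hrec, hEn, hfr]
    field_simp
    ring

lemma err_ne {α : ℝ} (hα : Irrational α) : ∀ n, (cden α n : ℝ) * α - cnum α n ≠ 0 := by
  intro n
  induction n with
  | zero =>
    show ((1:ℤ) : ℝ) * α - ((pq α 0 : ℤ) : ℝ) ≠ 0
    push_cast
    intro h
    exact (hα.ne_int (pq α 0)) (by linarith)
  | succ n ih =>
    intro h
    have := err_rec hα n
    rw [h, zero_mul] at this
    exact ih (by linarith)

lemma xi_pos {α : ℝ} (hα : Irrational α) (n : ℕ) : 0 < xi α n :=
  abs_pos.mpr (err_ne hα n)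

lemma xi_rec {α : ℝ} (hα : Irrational α) (n : ℕ) :
    xi α (n + 1) * cq α (n + 2) = xi α n := by
  have h := err_rec hα n
  have h2 := congrArg abs h
  rw [abs_mul, abs_neg] at h2
  rw [xi, xi, ← h2, abs_of_pos (cq_pos hα (n+1))]

lemma inv_cq {α : ℝ} (n : ℕ) : 1 / cq α (n + 1) = Int.fract (cq α n) := by
  show 1 / (1 / Int.fract (cq α n)) = Int.fract (cq α n)
  rw [one_div_one_div]

lemma xi_Q {α : ℝ} (hα : Irrational α) :
    ∀ n, xi α n * ((cden α (n+1) : ℝ) + (cden α n : ℝ) / cq α (n + 2)) = 1 := by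
  intro n
  induction n with
  | zero =>
    have hx0 : xi α 0 = Int.fract α := by
      rw [xi]
      show |((1:ℤ):ℝ) * α - ((pq α 0 : ℤ):ℝ)| = _
      push_cast
      rw [abs_of_pos]
      · rw [Int.fract, pq]; norm_num [cq]
      · have h := fract_cq_pos hα 0
        rw [Int.fract] at h
        simp only [cq] at h
        rw [pq]; norm_num [cq]
        rw [Int.fract]; linarith
    have h1 : (cden α 0 : ℝ) / cq α 2 = 1 / cq α 2 := by
      show ((1:ℤ):ℝ) / _ = _ ; norm_num
    have h2 : ((cden α 1 : ℤ) : ℝ) = (pq α 1 : ℝ) := rfl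
    rw [hx0, h1, h2, inv_cq]
    have h3 : (pq α 1 : ℝ) + Int.fract (cq α 1) = cq α 1 := by
      rw [pq, Int.fract]; ring
    rw [h3]
    have h4 : cq α 1 = 1 / Int.fract α := by
      show (1:ℝ) / Int.fract (cq α 0) = _ ; norm_num [cq]
    have hf0 : Int.fract α ≠ 0 := by
      have h := fract_cq_pos hα 0
      simp only [cq] at h; linarith
    rw [h4]
    field_simp
  | succ n ih =>
    have hrec : ((cden α (n+2) : ℤ) : ℝ) = (pq α (n+2) : ℝ) * (cden α (n+1) : ℝ) + (cden α n : ℝ) := by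
      show ((pq α (n+2) * cden α (n+1) + cden α n : ℤ) : ℝ) = _
      push_cast; ring
    have hdiv : (cden α (n+1) : ℝ) / cq α (n + 3)
        = (cden α (n+1) : ℝ) * (cq α (n+2) - (pq α (n+2) : ℝ)) := by
      rw [div_eq_mul_one_div, inv_cq, Int.fract, pq]
    have hQ : ((cden α (n+2) : ℝ) + (cden α (n+1) : ℝ) / cq α (n + 3))
        = cq α (n+2) * ((cden α (n+1) : ℝ) + (cden α n : ℝ) / cq α (n + 2)) := by
      rw [hrec, hdiv]
      have hne : cq α (n+2) ≠ 0 := (cq_pos hα (n+1)).ne'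
      field_simp
      ring
    rw [hQ, ← mul_assoc, xi_rec hα n, ih]

theorem stmt19 (α β : ℝ) (hα : Irrational α) (hβ : Irrational β)
    (ν μ : ℕ) (b bm : ℤ) (hb : 0 < b) (hbm : 0 < bm)
    (hxe : xi α ν ≤ xi β μ)
    (hba : (b : ℝ) ≤ cq α (ν + 2))
    (hbb : cq β (μ + 2) * (bm : ℝ) ≤ cq α (ν + 2))
    (hq : cden α (ν + 1) ≤ cden β (μ + 1))
    (hrb : cden β μ * bm < cden α ν) :
    0 ≤ b * (cden β (μ + 1) - cden α (ν + 1)) ∧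
    b * (cden β (μ + 1) - cden α (ν + 1)) ≤ cden α ν - cden β μ * bm ∧
    (cq β (μ + 2) * (bm : ℝ) < cq α (ν + 2) →
      b * (cden β (μ + 1) - cden α (ν + 1)) < cden α ν - cden β μ * bm) := by
  have hA1 : 1 < cq α (ν + 2) := cq_gt_one hα (ν + 1)
  have hB1 : 1 < cq β (μ + 2) := cq_gt_one hβ (μ + 1)
  have hA0 : (0:ℝ) < cq α (ν + 2) := by linarith
  have hB0 : (0:ℝ) < cq β (μ + 2) := by linarith
  have hqν : (0:ℝ) < cden α ν := by exact_mod_cast cden_pos hα ν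
  have hrμ : (0:ℝ) < cden β μ := by exact_mod_cast cden_pos hβ μ
  have hxα := xi_pos hα ν
  have hxβ := xi_pos hβ μ
  have hFα : (cden α (ν+1) : ℝ) + (cden α ν : ℝ) / cq α (ν + 2) = 1 / xi α ν :=
    eq_one_div_of_mul_eq_one_right (xi_Q hα ν)
  have hFβ : (cden β (μ+1) : ℝ) + (cden β μ : ℝ) / cq β (μ + 2) = 1 / xi β μ :=
    eq_one_div_of_mul_eq_one_right (xi_Q hβ μ)
  have hF : (cden β (μ+1) : ℝ) + (cden β μ : ℝ) / cq β (μ + 2)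
      ≤ (cden α (ν+1) : ℝ) + (cden α ν : ℝ) / cq α (ν + 2) := by
    rw [hFα, hFβ]
    exact one_div_le_one_div_of_le hxα hxe
  set X : ℝ := (cden β (μ+1) : ℝ) - (cden α (ν+1) : ℝ) with hXdef
  set C : ℝ := (cden α ν : ℝ) - (cden β μ : ℝ) * (bm : ℝ) with hCdef
  have hC : 0 < C := by
    rw [hCdef]
    have : ((cden β μ * bm : ℤ) : ℝ) < ((cden α ν : ℤ) : ℝ) := by exact_mod_cast hrb
    push_cast at this
    linarith
  have hX0 : 0 ≤ X := by
    rw [hXdef]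
    have : ((cden α (ν+1) : ℤ) : ℝ) ≤ ((cden β (μ+1) : ℤ) : ℝ) := by exact_mod_cast hq
    linarith
  have hX : X ≤ (cden α ν : ℝ) / cq α (ν + 2) - (cden β μ : ℝ) / cq β (μ + 2) := by
    rw [hXdef]; linarith
  have h2 : (cden β μ : ℝ) * (bm : ℝ) / cq α (ν + 2) ≤ (cden β μ : ℝ) / cq β (μ + 2) := by
    rw [div_le_div_iff₀ hA0 hB0]
    nlinarith
  have hXt : X ≤ C / cq α (ν + 2) := by
    rw [hCdef, sub_div]
    have : (cden β μ : ℝ) * (bm : ℝ) / cq α (ν + 2)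
        = (cden β μ : ℝ) * (bm : ℝ) / cq α (ν + 2) := rfl
    linarith [h2, hX]
  have ht : C / cq α (ν + 2) * cq α (ν + 2) = C := div_mul_cancel₀ _ hA0.ne'
  have ht0 : 0 < C / cq α (ν + 2) := div_pos hC hA0
  have hbR : (0:ℝ) < (b : ℝ) := by exact_mod_cast hb
  have hmain : (b : ℝ) * X ≤ C := by
    nlinarith [mul_le_mul_of_nonneg_left hXt hbR.le,
      mul_le_mul_of_nonneg_right hba ht0.le, ht]
  refine ⟨mul_nonneg hb.le (sub_nonneg.mpr hq), ?_, ?_⟩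
  · have : ((b * (cden β (μ+1) - cden α (ν+1)) : ℤ) : ℝ) ≤ ((cden α ν - cden β μ * bm : ℤ) : ℝ) := by
      push_cast
      rw [hCdef, hXdef] at hmain
      linarith
    exact_mod_cast this
  · intro hstrict
    have h2' : (cden β μ : ℝ) * (bm : ℝ) / cq α (ν + 2) < (cden β μ : ℝ) / cq β (μ + 2) := by
      rw [div_lt_div_iff₀ hA0 hB0]
      nlinarith
    have hXt' : X < C / cq α (ν + 2) := by
      rw [hCdef, sub_div]
      linarith [h2', hX]
    have hmain' : (b : ℝ) * X < C := by
      nlinarith [mul_lt_mul_of_pos_left hXt' hbR,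
        mul_le_mul_of_nonneg_right hba ht0.le, ht]
    have : ((b * (cden β (μ+1) - cden α (ν+1)) : ℤ) : ℝ) < ((cden α ν - cden β μ * bm : ℤ) : ℝ) := by
      push_cast
      rw [hCdef, hXdef] at hmain'
      linarith
    exact_mod_cast this
end
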